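/- Harrop's rule is superintuitionistic: for distinct propositional variables p, q, r, the formula (¬p→(q∨r))→((¬p→q)∨(¬p→r)) is not derivable in intuitionistic propositional logic, although it is a classical propositional tautology. -/

import Mathlib

/-!
Common framework for proof-theoretic validity (Prawitz / Piecha–Schroeder-Heister style).

* Propositional formulas over countably many atoms (`ℕ`), with `⊥`, `∧`, `∨`, `→`;
  `¬A` abbreviates `A → ⊥`.
* Higher-level atomic rules: a rule has a finite list of premises, each premise being
  a pair of (a finite list of lower-level rules that may be discharged, an atomic
  conclusion), together with an atomic conclusion.  An atomic axiom `p̄` is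
  `HLRule.mk [] p`; an assumption of an atom is identified with its axiom rule.
* `AtDeriv S p`: the atom `p` is derivable using only rules of `S`
  (discharged rules become available).
* `Deriv S Γ φ`: natural deduction NJ augmented with the atomic rules in `S`,
  from hypotheses `Γ`.  `⊢_IPC` is `Deriv ∅ ∅`.
* `Valid 𝔖 S φ` formalizes "there is a closed `S`-valid argument for `φ`" relative to
  the proof-theoretic system `𝔖` (acceptable extensions of `S` are the supersets of `S`
  belonging to `𝔖`).  Unfolding the inductive definition of `S`-validity of arguments
  (atomic case, closed introduction case, closed non-introduction case, open case)
  clause-by-clause on the conclusion yields exactly the following recursion on formulas: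
  a closed valid argument for `A ∧ B` reduces (via the non-introduction case) to one
  ending in `∧`-introduction, i.e. closed valid arguments for `A` and `B`; similarly for
  `∨`; a closed valid argument for `A → B` reduces to one ending in `→`-introduction,
  whose immediate subargument is an open argument of `B` from the assumption `A`, which
  by the open case is valid iff every acceptable extension `S' ∈ 𝔖` of `S` having a
  closed `S'`-valid argument for `A` has one for `B`; a closed valid argument for an
  atom `p` exists iff `p` is `S`-derivable; and for `⊥` (which has no introduction rule,
  and is governed by the rules `⊥/p` for every atom `p`) iff every atom is `S`-derivable.
-/

/-- Propositional formulas over atoms `ℕ`. -/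
inductive PropForm : Type
  | atom : ℕ → PropForm
  | falsum : PropForm
  | conj : PropForm → PropForm → PropForm
  | disj : PropForm → PropForm → PropForm
  | impl : PropForm → PropForm → PropForm
  deriving DecidableEq

/-- `¬A` abbreviates `A → ⊥`. -/
def PropForm.neg (A : PropForm) : PropForm := .impl A .falsum

/-- Higher-level atomic rules. -/
inductive HLRule : Type
  | mk : List (List HLRule × ℕ) → ℕ → HLRule

/-- `AtDeriv S p`: the atom `p` is derivable using only the atomic rules in `S`;
applying a rule requires deriving each premise with its discharged rules made available. -/
inductive AtDeriv : Set HLRule → ℕ → Prop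
  | app (S : Set HLRule) (prems : List (List HLRule × ℕ)) (concl : ℕ)
      (hmem : HLRule.mk prems concl ∈ S)
      (hprem : ∀ pr ∈ prems, AtDeriv (S ∪ {R | R ∈ pr.1}) pr.2) :
      AtDeriv S concl

/-- Natural deduction NJ for intuitionistic propositional logic, augmented with the
atomic rules in `S`, with hypotheses `Γ`.  `Deriv ∅ Γ φ` is `Γ ⊢_IPC φ`. -/
inductive Deriv : Set HLRule → Set PropForm → PropForm → Prop
  | hyp {S : Set HLRule} {Γ : Set PropForm} {A : PropForm} :
      A ∈ Γ → Deriv S Γ A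
  | falsumE {S : Set HLRule} {Γ : Set PropForm} {A : PropForm} :
      Deriv S Γ .falsum → Deriv S Γ A
  | andI {S : Set HLRule} {Γ : Set PropForm} {A B : PropForm} :
      Deriv S Γ A → Deriv S Γ B → Deriv S Γ (.conj A B)
  | andE1 {S : Set HLRule} {Γ : Set PropForm} {A B : PropForm} :
      Deriv S Γ (.conj A B) → Deriv S Γ A
  | andE2 {S : Set HLRule} {Γ : Set PropForm} {A B : PropForm} :
      Deriv S Γ (.conj A B) → Deriv S Γ B
  | orI1 {S : Set HLRule} {Γ : Set PropForm} {A B : PropForm} :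
      Deriv S Γ A → Deriv S Γ (.disj A B)
  | orI2 {S : Set HLRule} {Γ : Set PropForm} {A B : PropForm} :
      Deriv S Γ B → Deriv S Γ (.disj A B)
  | orE {S : Set HLRule} {Γ : Set PropForm} {A B C : PropForm} :
      Deriv S Γ (.disj A B) → Deriv S (insert A Γ) C → Deriv S (insert B Γ) C →
      Deriv S Γ C
  | implI {S : Set HLRule} {Γ : Set PropForm} {A B : PropForm} :
      Deriv S (insert A Γ) B → Deriv S Γ (.impl A B)
  | implE {S : Set HLRule} {Γ : Set PropForm} {A B : PropForm} :
      Deriv S Γ (.impl A B) → Deriv S Γ A → Deriv S Γ B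
  | rule {S : Set HLRule} {Γ : Set PropForm}
      (prems : List (List HLRule × ℕ)) (concl : ℕ) :
      HLRule.mk prems concl ∈ S →
      (∀ pr ∈ prems, Deriv (S ∪ {R | R ∈ pr.1}) Γ (.atom pr.2)) →
      Deriv S Γ (.atom concl)

/-- `⊢_IPC φ` : derivability of `φ` in intuitionistic propositional natural deduction. -/
def IPC (φ : PropForm) : Prop := Deriv ∅ ∅ φ

/-- Auxiliary form of validity, by recursion on the formula. -/
def ValidAux (𝔖 : Set (Set HLRule)) : PropForm → Set HLRule → Prop
  | .atom p, S => AtDeriv S p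
  | .falsum, S => ∀ a : ℕ, AtDeriv S a
  | .conj A B, S => ValidAux 𝔖 A S ∧ ValidAux 𝔖 B S
  | .disj A B, S => ValidAux 𝔖 A S ∨ ValidAux 𝔖 B S
  | .impl A B, S => ∀ S' ∈ 𝔖, S ⊆ S' → ValidAux 𝔖 A S' → ValidAux 𝔖 B S'

/-- `Valid 𝔖 S φ`: relative to the proof-theoretic system `𝔖` (in which the acceptable
extensions of `S` are exactly the supersets of `S` belonging to `𝔖`), there is a closed
`S`-valid argument for `φ`. -/
def Valid (𝔖 : Set (Set HLRule)) (S : Set HLRule) (φ : PropForm) : Prop :=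
  ValidAux 𝔖 φ S

/-- `𝔖 ⊨ φ`: for every `S ∈ 𝔖` there is a closed `S`-valid argument for `φ`
(acceptable extensions taken in `𝔖`). -/
def Models (𝔖 : Set (Set HLRule)) (φ : PropForm) : Prop :=
  ∀ S ∈ 𝔖, Valid 𝔖 S φ

/-- The complete proof-theoretic system: all sets of atomic rules of all levels. -/
def completeSystem : Set (Set HLRule) := Set.univ

/-- `S`-validity of the open one-premise/one-assumption argument from `A` to `B`
(relative to `𝔖`): by the open case, for every acceptable extension `S' ∈ 𝔖` of `S`,
substituting any closed `S'`-valid argument for the assumption `A` yields an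
`S'`-valid closed argument, which (the final step not being an introduction rule)
amounts to the existence of a closed `S'`-valid argument for `B`. -/
def OpenArgValid1 (𝔖 : Set (Set HLRule)) (S : Set HLRule) (A B : PropForm) : Prop :=
  ∀ S' ∈ 𝔖, S ⊆ S' → Valid 𝔖 S' A → Valid 𝔖 S' B

/-- Classical Boolean evaluation of a formula under a valuation `v` (with `⊥ ↦ false`). -/
def PropForm.eval (v : ℕ → Bool) : PropForm → Bool
  | .atom a => v a
  | .falsum => false
  | .conj A B => A.eval v && B.eval v
  | .disj A B => A.eval v || B.eval v
  | .impl A B => !A.eval v || B.eval v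

/-!
Kripke semantics is sound for NJ, so it suffices to find a Kripke model whose root does not force
the formula. Take a root below three final worlds at which exactly `p`, `q`, `r` hold. Forcing at a
final world is classical, so `¬p → q ∨ r` is forced at each leaf, and also at the root, where `¬p`
fails because of the `p`-leaf. But `¬p → q` fails at the `r`-leaf and `¬p → r` at the `q`-leaf.
-/

namespace PropForm

def harrop (A B C : PropForm) : PropForm :=
  impl (impl A (disj B C)) (disj (impl A B) (impl A C))

theorem eval_harrop (v : ℕ → Bool) (A B C : PropForm) : (harrop A B C).eval v = true := by
  simp only [harrop, eval]
  cases A.eval v <;> cases B.eval v <;> cases C.eval v <;> rfl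

end PropForm

section Kripke

variable {W : Type*} [Preorder W] {V : ℕ → Set W}

namespace PropForm

def Forces (V : ℕ → Set W) : W → PropForm → Prop
  | w, atom a => w ∈ V a
  | _, falsum => False
  | w, conj A B => Forces V w A ∧ Forces V w B
  | w, disj A B => Forces V w A ∨ Forces V w B
  | w, impl A B => ∀ w', w ≤ w' → Forces V w' A → Forces V w' B

theorem Forces.mono (hV : ∀ a, IsUpperSet (V a)) {A : PropForm} {w w' : W} (hw : w ≤ w')
    (h : A.Forces V w) : A.Forces V w' := by
  induction A generalizing w w' with
  | atom a => exact hV a hw h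
  | falsum => exact h
  | conj A B ihA ihB => exact ⟨ihA hw h.1, ihB hw h.2⟩
  | disj A B ihA ihB => exact h.imp (ihA hw) (ihB hw)
  | impl A B => exact fun w'' hw' => h w'' (hw.trans hw')

theorem forces_iff_eval_of_isMax (hV : ∀ a, IsUpperSet (V a)) {w : W} (hw : IsMax w)
    {v : ℕ → Bool} (hv : ∀ a, v a = true ↔ w ∈ V a) (A : PropForm) :
    A.Forces V w ↔ A.eval v = true := by
  induction A with
  | atom a => exact (hv a).symm
  | falsum => simp [Forces, eval]
  | conj A B ihA ihB => simp [Forces, eval, ihA, ihB]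
  | disj A B ihA ihB => simp [Forces, eval, ihA, ihB]
  | impl A B ihA ihB =>
    have hforces_impl : (impl A B).Forces V w ↔ (A.Forces V w → B.Forces V w) :=
      ⟨fun h => h w le_rfl,
        fun h _ hw' hA => (h (hA.mono hV (hw hw'))).mono hV hw'⟩
    rw [hforces_impl, ihA, ihB]
    simp only [eval]
    cases A.eval v <;> cases B.eval v <;> decide

end PropForm

theorem Deriv.forces (hV : ∀ a, IsUpperSet (V a)) {Γ : Set PropForm} {φ : PropForm}
    (h : Deriv ∅ Γ φ) {w : W} (hΓ : ∀ ψ ∈ Γ, ψ.Forces V w) : φ.Forces V w := by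
  generalize hS : (∅ : Set HLRule) = S at h
  induction h generalizing w with
  | hyp hA => exact hΓ _ hA
  | falsumE _ ih => exact (ih hΓ hS).elim
  | andI _ _ ihA ihB => exact ⟨ihA hΓ hS, ihB hΓ hS⟩
  | andE1 _ ih => exact (ih hΓ hS).1
  | andE2 _ ih => exact (ih hΓ hS).2
  | orI1 _ ih => exact Or.inl (ih hΓ hS)
  | orI2 _ ih => exact Or.inr (ih hΓ hS)
  | orE _ _ _ ih ihA ihB =>
    rcases ih hΓ hS with hA | hB
    · exact ihA (Set.forall_mem_insert.2 ⟨hA, hΓ⟩) hS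
    · exact ihB (Set.forall_mem_insert.2 ⟨hB, hΓ⟩) hS
  | implI _ ih =>
    exact fun w' hw' hA =>
      ih (Set.forall_mem_insert.2 ⟨hA, fun ψ hψ => (hΓ ψ hψ).mono hV hw'⟩) hS
  | implE _ _ ihAB ihA => exact ihAB hΓ hS w le_rfl (ihA hΓ hS)
  | rule _ _ hmem => exact (hS ▸ hmem).elim

theorem IPC.forces (hV : ∀ a, IsUpperSet (V a)) {φ : PropForm} (h : IPC φ) (w : W) :
    φ.Forces V w :=
  Deriv.forces hV h fun _ hψ => hψ.elim

end Kripke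

section FlatDomain

variable {ι : Type*}

/-- On the flat domain `Part ι` (`Part.none` below the pairwise incomparable `Part.some i`),
the atom `label i` holds at the leaf `Part.some i`. -/
def leafValuation (label : ι → ℕ) (a : ℕ) : Set (Part ι) :=
  {x | ∃ i ∈ x, label i = a}

theorem isUpperSet_leafValuation (label : ι → ℕ) (a : ℕ) :
    IsUpperSet (leafValuation label a) :=
  fun _ _ hxy ⟨i, hi, h⟩ => ⟨i, hxy i hi, h⟩

theorem Part.isMax_some (i : ι) : IsMax (Part.some i) :=
  fun _ h j hj => by rw [Part.mem_unique hj (h i (Part.mem_some i))]; exact Part.mem_some i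

theorem PropForm.forces_some_iff_eval (label : ι → ℕ) (i : ι) (A : PropForm) :
    A.Forces (leafValuation label) (Part.some i) ↔
      A.eval (fun a => decide (label i = a)) = true :=
  forces_iff_eval_of_isMax (isUpperSet_leafValuation label) (Part.isMax_some i) (fun a => by
    simp only [decide_eq_true_eq, leafValuation, Set.mem_ofPred_eq, Part.mem_some_iff,
      exists_eq_left])
    A

end FlatDomain

open PropForm in
theorem not_forces_harrop_bot {p q r : ℕ} (hpq : p ≠ q) (hpr : p ≠ r) (hqr : q ≠ r) :
    ¬ (harrop (neg (atom p)) (atom q) (atom r)).Forces (leafValuation ![p, q, r]) ⊥ := by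
  have hV := isUpperSet_leafValuation ![p, q, r]
  have hleaf := forces_some_iff_eval ![p, q, r]
  have hant :
      (impl (neg (atom p)) (disj (atom q) (atom r))).Forces (leafValuation ![p, q, r]) ⊥ := by
    intro x _ hnp
    obtain rfl | ⟨i, rfl⟩ := Part.eq_none_or_eq_some x
    · have := (hleaf 0 _).1 (hnp.mono hV bot_le)
      simp [eval, neg] at this
    · rw [hleaf] at hnp ⊢
      fin_cases i <;> simp [eval, neg, hqr, hpq.symm, hpr.symm, hqr.symm] at hnp ⊢
  intro h
  rcases h ⊥ le_rfl hant with hq | hr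
  · have := (hleaf 2 _).1 (hq.mono hV bot_le)
    simp [eval, neg, hpr.symm, hqr.symm] at this
  · have := (hleaf 1 _).1 (hr.mono hV bot_le)
    simp [eval, neg, hpq.symm, hqr] at this

/-- **Harrop's rule is superintuitionistic.**  For distinct propositional variables
`p, q, r`, the formula `(¬p → (q ∨ r)) → ((¬p → q) ∨ (¬p → r))` is not derivable in
intuitionistic propositional logic, although it is a classical tautology. -/
theorem harrop_superintuitionistic (p q r : ℕ)
    (hpq : p ≠ q) (hpr : p ≠ r) (hqr : q ≠ r) :
    ¬ IPC (.impl (.impl (PropForm.neg (.atom p)) (.disj (.atom q) (.atom r)))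
            (.disj (.impl (PropForm.neg (.atom p)) (.atom q))
                   (.impl (PropForm.neg (.atom p)) (.atom r)))) ∧
      ∀ v : ℕ → Bool,
        PropForm.eval v
          (.impl (.impl (PropForm.neg (.atom p)) (.disj (.atom q) (.atom r)))
            (.disj (.impl (PropForm.neg (.atom p)) (.atom q))
                   (.impl (PropForm.neg (.atom p)) (.atom r)))) = true := by
  exact ⟨fun hIPC => not_forces_harrop_bot hpq hpr hqr
      (hIPC.forces (isUpperSet_leafValuation ![p, q, r]) ⊥),
    fun v => PropForm.eval_harrop v _ _ _⟩
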